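/- arXiv:1602.03311 — 2 statements merged into one kernel-verified Lean document; each statement's English description precedes it below -/
import Mathlib

section
/- Let A be an n×n pairwise comparison matrix (n ≥ 3) and w a positive weight vector. Then w is efficient for A if and only if w is locally efficient for A, i.e., if and only if there exists an open neighborhood V of w in ℝ^n such that no positive weight vector w′ ∈ V dominates w. -/
/-!
Efficiency is a global property, so the only content is that a dominating vector `w'` far
from `w` yields one arbitrarily close to `w`. Along the segment `(1 - t) • w + t • w'` every
ratio `wₜ i / wₜ j` is itself a convex combination of `w i / w j` and `w' i / w' j` (with a
parameter in `(0, 1)` depending on `i, j`), and `y ↦ |a - y|` is convex; hence every point of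
the open segment dominates `w`, and points with small `t` lie in any neighbourhood of `w`.
-/

open Filter Topology Set

def Dominates {ι : Type*} (A : Matrix ι ι ℝ) (w' w : ι → ℝ) : Prop :=
  (∀ i j, |A i j - w' i / w' j| ≤ |A i j - w i / w j|) ∧
    ∃ k l, |A k l - w' k / w' l| < |A k l - w k / w l|

theorem exists_div_convexCombo_eq_convexCombo_div (a b : ℝ) {c d t : ℝ} (hc : 0 < c)
    (hd : 0 < d) (ht : t ∈ Ioo (0 : ℝ) 1) :
    ∃ s ∈ Ioo (0 : ℝ) 1,
      ((1 - t) * a + t * b) / ((1 - t) * c + t * d) = (1 - s) * (a / c) + s * (b / d) := by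
  obtain ⟨ht₀, ht₁⟩ := ht
  have hden : 0 < (1 - t) * c + t * d := by nlinarith
  -- a mediant: the weights are proportional to the weighted denominators
  refine ⟨t * d / ((1 - t) * c + t * d), ⟨by positivity, ?_⟩, ?_⟩
  · rw [div_lt_one hden]
    nlinarith
  · field_simp
    ring

theorem abs_sub_convexCombo_le (x r₀ r₁ : ℝ) {s : ℝ} (hs : s ∈ Icc (0 : ℝ) 1) :
    |x - ((1 - s) * r₀ + s * r₁)| ≤ (1 - s) * |x - r₀| + s * |x - r₁| :=
  calc |x - ((1 - s) * r₀ + s * r₁)| = |(1 - s) * (x - r₀) + s * (x - r₁)| := by ring_nf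
    _ ≤ |(1 - s) * (x - r₀)| + |s * (x - r₁)| := abs_add_le _ _
    _ = (1 - s) * |x - r₀| + s * |x - r₁| := by
      rw [abs_mul, abs_mul, abs_of_nonneg hs.1, abs_of_nonneg (sub_nonneg.2 hs.2)]

theorem convexCombo_pos {ι : Type*} {w w' : ι → ℝ} (hw : ∀ i, 0 < w i) (hw' : ∀ i, 0 < w' i)
    {t : ℝ} (ht : t ∈ Ioo (0 : ℝ) 1) (i : ι) : 0 < (1 - t) * w i + t * w' i :=
  add_pos (mul_pos (sub_pos.2 ht.2) (hw i)) (mul_pos ht.1 (hw' i))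

theorem Dominates.convexCombo {ι : Type*} {A : Matrix ι ι ℝ} {w' w : ι → ℝ}
    (h : Dominates A w' w) (hw' : ∀ i, 0 < w' i) (hw : ∀ i, 0 < w i) {t : ℝ}
    (ht : t ∈ Ioo (0 : ℝ) 1) :
    Dominates A (fun i => (1 - t) * w i + t * w' i) w := by
  have key : ∀ i j, ∃ s ∈ Ioo (0 : ℝ) 1,
      |A i j - ((1 - t) * w i + t * w' i) / ((1 - t) * w j + t * w' j)| ≤
        (1 - s) * |A i j - w i / w j| + s * |A i j - w' i / w' j| := fun i j => by
    obtain ⟨s, hs, hratio⟩ :=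
      exists_div_convexCombo_eq_convexCombo_div (w i) (w' i) (hw j) (hw' j) ht
    exact ⟨s, hs, hratio ▸ abs_sub_convexCombo_le _ _ _ (Ioo_subset_Icc_self hs)⟩
  obtain ⟨hle, k, l, hlt⟩ := h
  refine ⟨fun i j => ?_, k, l, ?_⟩
  · obtain ⟨s, hs, hbound⟩ := key i j
    nlinarith [mul_le_mul_of_nonneg_left (hle i j) hs.1.le]
  · obtain ⟨s, hs, hbound⟩ := key k l
    nlinarith [mul_lt_mul_of_pos_left hlt hs.1]

theorem efficiency_iff_local_efficiency_general
    {n : ℕ} (A : Matrix (Fin n) (Fin n) ℝ)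
    (w : Fin n → ℝ) (hw : ∀ i, 0 < w i) :
    (¬ ∃ w' : Fin n → ℝ, (∀ i, 0 < w' i) ∧
        (∀ i j, |A i j - w' i / w' j| ≤ |A i j - w i / w j|) ∧
        (∃ k l, |A k l - w' k / w' l| < |A k l - w k / w l|)) ↔
    (∃ V : Set (Fin n → ℝ), IsOpen V ∧ w ∈ V ∧
      ¬ ∃ w' : Fin n → ℝ, w' ∈ V ∧ (∀ i, 0 < w' i) ∧
        (∀ i j, |A i j - w' i / w' j| ≤ |A i j - w i / w j|) ∧
        (∃ k l, |A k l - w' k / w' l| < |A k l - w k / w l|)) := by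
  constructor
  · exact fun h => ⟨univ, isOpen_univ, mem_univ w,
      fun ⟨w', _, hw', hdom⟩ => h ⟨w', hw', hdom⟩⟩
  · rintro ⟨V, hV, hwV, hno⟩ ⟨w', hw', hdom⟩
    have hpath : Tendsto (fun t : ℝ => fun i => (1 - t) * w i + t * w' i) (𝓝[>] 0) (𝓝 w) :=
      ((continuous_pi fun i => by fun_prop).tendsto' 0 w (by simp)).mono_left
        nhdsWithin_le_nhds
    obtain ⟨t, htV, ht⟩ :=
      ((hpath.eventually (hV.mem_nhds hwV)).and (Ioo_mem_nhdsGT one_pos)).exists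
    exact hno ⟨_, htV, convexCombo_pos hw hw' ht, Dominates.convexCombo hdom hw' hw ht⟩

/-- `w` is efficient iff it is locally efficient, i.e. iff there is an
open neighborhood `V` of `w` in which no positive weight vector dominates `w`. -/
theorem efficiency_iff_local_efficiency
    {n : ℕ} (hn : 3 ≤ n) (A : Matrix (Fin n) (Fin n) ℝ)
    (hApos : ∀ i j, 0 < A i j) (hArec : ∀ i j, A i j = (A j i)⁻¹)
    (w : Fin n → ℝ) (hw : ∀ i, 0 < w i) :
    (¬ ∃ w' : Fin n → ℝ, (∀ i, 0 < w' i) ∧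
        (∀ i j, |A i j - w' i / w' j| ≤ |A i j - w i / w j|) ∧
        (∃ k l, |A k l - w' k / w' l| < |A k l - w k / w l|)) ↔
    (∃ V : Set (Fin n → ℝ), IsOpen V ∧ w ∈ V ∧
      ¬ ∃ w' : Fin n → ℝ, w' ∈ V ∧ (∀ i, 0 < w' i) ∧
        (∀ i j, |A i j - w' i / w' j| ≤ |A i j - w i / w j|) ∧
        (∃ k l, |A k l - w' k / w' l| < |A k l - w k / w l|)) :=
  efficiency_iff_local_efficiency_general A w hw
end

section
/- Let A be an n×n pairwise comparison matrix (n ≥ 3) and w a positive weight vector. Then w is strongly inefficient for A if and only if the set of outdegrees of the vertices in the directed graph associated to A and w equals {0, 1, 2, …, n−1}. -/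
/-!
Write `r i j = w i / w j`. Reciprocity of `A` makes the associated digraph semicomplete: if
`i → j` is missing then `r i j < A i j`, hence `r j i > A j i` and `j → i` is present.

If `w'` is strictly better than `w`, every ratio `w' i / w' j` lies strictly between `A i j` and
`r i j`, so `i → j` holds exactly when `w' i / w i < w' j / w j`: the digraph is the transitive
tournament of a ranking, and its outdegrees are `0, …, n - 1`.

Conversely, in a semicomplete digraph with outdegrees `0, …, n - 1`, strong induction on the
outdegree shows that every vertex points exactly to the vertices of smaller outdegree `d`. Then
`w' i = w i * t ^ d i` with `t < 1` close enough to `1` moves every ratio strictly towards `A i j`.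
-/

open scoped Classical

open Finset

namespace Relation

variable {α : Type*} [Fintype α] [DecidableEq α] (R : α → α → Prop) [DecidableRel R]

def outdegree (i : α) : ℕ := #{j | j ≠ i ∧ R i j}

variable {R}

theorem image_outdegree_eq_range {β : Type*} [LinearOrder β]
    (htotal : ∀ i j, i ≠ j → R i j ∨ R j i) (x : α → β) (hx : ∀ i j, i ≠ j → (R i j ↔ x i < x j)) :
    univ.image (outdegree R) = range (Fintype.card α) := by
  have hdeg : ∀ i, outdegree R i = #{j | x i < x j} := fun i => by
    refine congrArg card (filter_congr fun j _ => ?_)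
    by_cases hji : j = i
    · simp [hji]
    · simp [hji, hx i j (Ne.symm hji)]
  have hanti : ∀ i j, x i < x j → outdegree R j < outdegree R i := fun i j hij => by
    rw [hdeg, hdeg]
    refine card_lt_card ⟨fun k hk => ?_, fun hsub => ?_⟩
    · simp only [mem_filter, mem_univ, true_and] at hk ⊢
      exact hij.trans hk
    simpa using hsub (mem_filter.mpr ⟨mem_univ j, hij⟩)
  have hinj : Function.Injective (outdegree R) := fun i j hdij => by
    by_contra hij
    rcases htotal i j hij with h | h
    · exact (hanti i j ((hx i j hij).1 h)).ne' hdij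
    · exact (hanti j i ((hx j i (Ne.symm hij)).1 h)).ne hdij
  refine eq_of_subset_of_card_le (fun m hm => ?_) ?_
  · obtain ⟨i, -, rfl⟩ := mem_image.mp hm
    exact mem_range.mpr (card_lt_univ_of_notMem (x := i) (by simp))
  · rw [card_range, card_image_of_injective _ hinj, card_univ]

theorem rel_iff_outdegree_lt (htotal : ∀ i j, i ≠ j → R i j ∨ R j i)
    (himage : univ.image (outdegree R) = range (Fintype.card α)) {i j : α} (hij : i ≠ j) :
    R i j ↔ outdegree R j < outdegree R i := by
  set d := outdegree R
  have hinj : Function.Injective d := by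
    rw [← Set.injOn_univ, ← coe_univ, ← card_image_iff, himage, card_range, card_univ]
  have hlower : ∀ i, #{j | d j < d i} = d i := fun i => by
    have hlt : d i < Fintype.card α := mem_range.mp (himage ▸ mem_image_of_mem d (mem_univ i))
    rw [← card_image_of_injective _ hinj]
    convert card_range (d i) using 2
    ext m
    simp only [mem_image, mem_filter, mem_univ, true_and, mem_range]
    refine ⟨fun ⟨j, hj, hjm⟩ => hjm ▸ hj, fun hm => ?_⟩
    obtain ⟨j, -, hjm⟩ := mem_image.mp (himage ▸ mem_range.mpr (hm.trans hlt))
    exact ⟨j, hjm ▸ hm, hjm⟩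
  -- Each `j` of smaller outdegree points only further down, so `i → j`; as there are `d i` such
  -- `j`, they are all the out-neighbours of `i`.
  have hout : ∀ i, univ.filter (fun j => j ≠ i ∧ R i j) = univ.filter (fun j => d j < d i) := by
    intro i
    induction hm : d i using Nat.strong_induction_on generalizing i with
    | _ m ih =>
      subst hm
      symm
      refine eq_of_subset_of_card_le (fun j hj => ?_) (hlower i).ge
      have hji : d j < d i := (mem_filter.mp hj).2
      have hne : j ≠ i := ne_of_apply_ne d hji.ne
      have hnot : ¬ R j i := fun h => by
        have : i ∈ univ.filter (fun k => k ≠ j ∧ R j k) := by simp [Ne.symm hne, h]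
        rw [ih (d j) hji j rfl] at this
        exact hji.not_gt (mem_filter.mp this).2
      simpa [hne] using (htotal i j (Ne.symm hne)).resolve_right hnot
  simpa [Ne.symm hij] using congrArg (j ∈ ·) (hout i)

end Relation

section AbsSub

variable {α : Type*} [AddCommGroup α] [LinearOrder α] [IsOrderedAddMonoid α] {a x y : α}

theorem abs_sub_lt_abs_sub_of_lt_of_lt (h₁ : a < y) (h₂ : y < x) : |a - y| < |a - x| := by
  rw [abs_sub_comm, abs_of_pos (sub_pos.2 h₁), abs_sub_comm, abs_of_pos (sub_pos.2 (h₁.trans h₂))]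
  exact sub_lt_sub_right h₂ a

theorem abs_sub_lt_abs_sub_of_lt_of_lt' (h₁ : x < y) (h₂ : y < a) : |a - y| < |a - x| := by
  rw [abs_of_pos (sub_pos.2 h₂), abs_of_pos (sub_pos.2 (h₁.trans h₂))]
  exact sub_lt_sub_left h₁ a

theorem le_iff_lt_of_abs_sub_lt_abs_sub (h : |a - y| < |a - x|) : a ≤ x ↔ y < x := by
  constructor
  · intro hax
    rw [abs_sub_comm a x, abs_of_nonneg (sub_nonneg.2 hax), abs_sub_lt_iff] at h
    exact sub_lt_sub_iff_right a |>.1 h.2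
  · intro hyx
    by_contra! hxa
    rw [abs_of_pos (sub_pos.2 hxa), abs_sub_lt_iff] at h
    exact hyx.not_gt (sub_lt_sub_iff_left a |>.1 h.1)

end AbsSub

theorem abs_inv_sub_inv_lt_of_lt_of_lt {a x y : ℝ} (ha : 0 < a) (h₁ : a < y) (h₂ : y < x) :
    |a⁻¹ - y⁻¹| < |a⁻¹ - x⁻¹| :=
  abs_sub_lt_abs_sub_of_lt_of_lt' (inv_strictAnti₀ (ha.trans h₁) h₂) (inv_strictAnti₀ ha h₁)

theorem mul_pow_div_mul_pow_lt_div {a b t : ℝ} {k m : ℕ} (ha : 0 < a) (hb : 0 < b) (ht₀ : 0 < t)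
    (ht₁ : t < 1) (hkm : k < m) : a * t ^ m / (b * t ^ k) < a / b := by
  rw [mul_div_mul_comm]
  refine mul_lt_of_lt_one_right (div_pos ha hb) ?_
  exact (div_lt_one (pow_pos ht₀ k)).2 (pow_lt_pow_right_of_lt_one₀ ht₀ ht₁ hkm)

open Filter Topology in
theorem exists_pow_perturbation {ι : Type*} [Finite ι] (a : ι → ι → ℝ) (w : ι → ℝ) (d : ι → ℕ)
    (hw : ∀ i, w i ≠ 0) (h : ∀ i j, d j < d i → a i j < w i / w j) :
    ∃ t : ℝ, 0 < t ∧ t < 1 ∧ ∀ i j, d j < d i → a i j < w i * t ^ d i / (w j * t ^ d j) := by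
  have hlim : ∀ i j, Tendsto (fun t : ℝ => w i * t ^ d i / (w j * t ^ d j)) (𝓝[<] 1)
      (𝓝 (w i / w j)) := fun i j => by
    have : ContinuousAt (fun t : ℝ => w i * t ^ d i / (w j * t ^ d j)) 1 :=
      by fun_prop (disch := simp [hw j])
    simpa using this.tendsto.mono_left nhdsWithin_le_nhds
  have hpos : ∀ᶠ t in 𝓝[<] (1 : ℝ), 0 < t :=
    eventually_nhdsWithin_of_eventually_nhds (lt_mem_nhds one_pos)
  have hclose : ∀ᶠ t in 𝓝[<] (1 : ℝ), ∀ i j, d j < d i → a i j < w i * t ^ d i / (w j * t ^ d j) :=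
    eventually_all.2 fun i => eventually_all.2 fun j => eventually_imp_distrib_left.2 fun hd =>
      (hlim i j).eventually_const_lt (h i j hd)
  obtain ⟨t, ht₀, hclose, ht₁⟩ := (hpos.and (hclose.and self_mem_nhdsWithin)).exists
  exact ⟨t, ht₀, ht₁, hclose⟩

namespace PairwiseComparison

variable {ι : Type*} {A : Matrix ι ι ℝ} {w : ι → ℝ}

theorem le_ratio_iff (hApos : ∀ i j, 0 < A i j) (hArec : ∀ i j, A i j = (A j i)⁻¹)
    (hw : ∀ i, 0 < w i) (i j : ι) : A i j ≤ w i / w j ↔ w j / w i ≤ A j i := by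
  rw [hArec i j, ← inv_div (w j) (w i)]
  exact inv_le_inv₀ (hApos j i) (div_pos (hw j) (hw i))

theorem lt_ratio_iff (hApos : ∀ i j, 0 < A i j) (hArec : ∀ i j, A i j = (A j i)⁻¹)
    (hw : ∀ i, 0 < w i) (i j : ι) : A i j < w i / w j ↔ w j / w i < A j i := by
  rw [hArec i j, ← inv_div (w j) (w i)]
  exact inv_lt_inv₀ (hApos j i) (div_pos (hw j) (hw i))

theorem le_ratio_or_le_ratio (hApos : ∀ i j, 0 < A i j) (hArec : ∀ i j, A i j = (A j i)⁻¹)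
    (hw : ∀ i, 0 < w i) (i j : ι) : A i j ≤ w i / w j ∨ A j i ≤ w j / w i :=
  (le_total (A i j) (w i / w j)).imp_right (le_ratio_iff hApos hArec hw j i).2

theorem le_ratio_iff_of_abs_sub_lt {w' : ι → ℝ} (hw : ∀ i, 0 < w i) (hw' : ∀ i, 0 < w' i)
    {i j : ι} (h : |A i j - w' i / w' j| < |A i j - w i / w j|) :
    A i j ≤ w i / w j ↔ w' i / w i < w' j / w j := by
  rw [le_iff_lt_of_abs_sub_lt_abs_sub h, div_lt_div_iff₀ (hw' j) (hw j),
    div_lt_div_iff₀ (hw i) (hw j), mul_comm (w i)]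

end PairwiseComparison

open PairwiseComparison in
theorem strongly_inefficient_iff_outdegrees_general
    {n : ℕ} (A : Matrix (Fin n) (Fin n) ℝ)
    (hApos : ∀ i j, 0 < A i j) (hArec : ∀ i j, A i j = (A j i)⁻¹)
    (w : Fin n → ℝ) (hw : ∀ i, 0 < w i) :
    (∃ w' : Fin n → ℝ, (∀ i, 0 < w' i) ∧
        (∀ i j, i ≠ j → |A i j - w' i / w' j| < |A i j - w i / w j|)) ↔
    Finset.image
      (fun i => (Finset.univ.filter (fun j => j ≠ i ∧ A i j ≤ w i / w j)).card)
      (Finset.univ : Finset (Fin n)) = Finset.range n := by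
  have hsemi : ∀ i j, i ≠ j → A i j ≤ w i / w j ∨ A j i ≤ w j / w i :=
    fun i j _ => le_ratio_or_le_ratio hApos hArec hw i j
  set d := Relation.outdegree fun i j => A i j ≤ w i / w j
  change _ ↔ univ.image d = _
  rw [show range n = range (Fintype.card (Fin n)) by rw [Fintype.card_fin]]
  constructor
  · rintro ⟨w', hw', hcloser⟩
    exact Relation.image_outdegree_eq_range hsemi (fun i => w' i / w i)
      fun i j hij => le_ratio_iff_of_abs_sub_lt hw hw' (hcloser i j hij)
  · intro himage
    have hrank : ∀ i j, i ≠ j → (A i j ≤ w i / w j ↔ d j < d i) :=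
      fun i j hij => Relation.rel_iff_outdegree_lt hsemi himage hij
    have hstrict : ∀ i j, d j < d i → A i j < w i / w j := fun i j hd =>
      (lt_ratio_iff hApos hArec hw i j).2 <| not_le.1 fun hji =>
        hd.not_gt ((hrank j i (ne_of_apply_ne d hd.ne)).1 hji)
    obtain ⟨t, ht₀, ht₁, hA⟩ :=
      exists_pow_perturbation A w d (fun i => (hw i).ne') hstrict
    refine ⟨fun i => w i * t ^ d i, fun i => mul_pos (hw i) (pow_pos ht₀ _), fun i j hij => ?_⟩
    rcases hsemi i j hij with h | h
    · have hd := (hrank i j hij).1 h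
      exact abs_sub_lt_abs_sub_of_lt_of_lt (hA i j hd)
        (mul_pow_div_mul_pow_lt_div (hw i) (hw j) ht₀ ht₁ hd)
    · have hd := (hrank j i hij.symm).1 h
      rw [hArec i j, ← inv_div (w j), ← inv_div (w j * _)]
      exact abs_inv_sub_inv_lt_of_lt_of_lt (hApos j i) (hA j i hd)
        (mul_pow_div_mul_pow_lt_div (hw j) (hw i) ht₀ ht₁ hd)

/-- `w` is strongly inefficient iff the set of outdegrees of the
associated digraph equals {0, 1, ..., n-1}. -/
theorem strongly_inefficient_iff_outdegrees
    {n : ℕ} (hn : 3 ≤ n) (A : Matrix (Fin n) (Fin n) ℝ)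
    (hApos : ∀ i j, 0 < A i j) (hArec : ∀ i j, A i j = (A j i)⁻¹)
    (w : Fin n → ℝ) (hw : ∀ i, 0 < w i) :
    (∃ w' : Fin n → ℝ, (∀ i, 0 < w' i) ∧
        (∀ i j, i ≠ j → |A i j - w' i / w' j| < |A i j - w i / w j|)) ↔
    Finset.image
      (fun i => (Finset.univ.filter (fun j => j ≠ i ∧ A i j ≤ w i / w j)).card)
      (Finset.univ : Finset (Fin n)) = Finset.range n :=
  strongly_inefficient_iff_outdegrees_general A hApos hArec w hw
end
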